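/- arXiv:1603.01560 — 4 statements merged into one kernel-verified Lean document; each statement's English description precedes it below -/
import Mathlib

section
/- A consistent sequence of S_n-representations extends to an FI-module if and only if for all m ≤ n, any two permutations σ₁, σ₂ ∈ S_n agreeing on {1,...,m} act identically on the image of V_m in V_n. -/
/-- The standard inclusion `S_n ↪ S_{n+1}`: extend a permutation of `Fin n` to `Fin (n+1)`
fixing the last point. -/
noncomputable def extPerm {n : ℕ} (σ : Equiv.Perm (Fin n)) : Equiv.Perm (Fin (n + 1)) :=
  σ.viaFintypeEmbedding Fin.castSuccEmb

/-- The composite `V_m → V_n` (for `m ≤ n`) of the structure maps of a consistent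
sequence. -/
noncomputable def transitionMap {𝕜 : Type*} [Field 𝕜] {V : ℕ → Type*}
    [∀ n, AddCommGroup (V n)] [∀ n, Module 𝕜 (V n)]
    (φ : ∀ n, V n →ₗ[𝕜] V (n + 1)) {m n : ℕ} (h : m ≤ n) : V m →ₗ[𝕜] V n :=
  Nat.leRecOn h (fun {j} (g : V m →ₗ[𝕜] V j) => (φ j).comp g) LinearMap.id

section Aux

variable {𝕜 : Type*} [Field 𝕜] {V : ℕ → Type*}
    [∀ n, AddCommGroup (V n)] [∀ n, Module 𝕜 (V n)]
    (φ : ∀ n, V n →ₗ[𝕜] V (n + 1))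

lemma transitionMap_refl (n : ℕ) : transitionMap φ (le_refl n) = LinearMap.id :=
  Nat.leRecOn_self _

lemma transitionMap_succ {m n : ℕ} (h : m ≤ n) (h' : m ≤ n + 1) :
    transitionMap φ h' = (φ n).comp (transitionMap φ h) :=
  Nat.leRecOn_succ h _

lemma transitionMap_trans {a b c : ℕ} (hab : a ≤ b) (hbc : b ≤ c) (hac : a ≤ c) :
    transitionMap φ hac = (transitionMap φ hbc).comp (transitionMap φ hab) := by
  induction c, hbc using Nat.le_induction with
  | base => rw [transitionMap_refl]; simp
  | succ n hn ih =>
      rw [transitionMap_succ φ hn (Nat.le_succ_of_le hn),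
        transitionMap_succ φ (hab.trans hn) hac, ih (hab.trans hn), LinearMap.comp_assoc]

lemma extPerm_castSucc {n : ℕ} (σ : Equiv.Perm (Fin n)) (i : Fin n) :
    extPerm σ (Fin.castSucc i) = Fin.castSucc (σ i) :=
  Equiv.Perm.viaFintypeEmbedding_apply_image σ Fin.castSuccEmb i

lemma exists_perm_ext
    (ρ : ∀ n, Representation 𝕜 (Equiv.Perm (Fin n)) (V n))
    (hconsistent : ∀ (n : ℕ) (σ : Equiv.Perm (Fin n)) (v : V n),
      φ n (ρ n σ v) = ρ (n + 1) (extPerm σ) (φ n v))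
    {m n : ℕ} (h : m ≤ n) (σ : Equiv.Perm (Fin m)) :
    ∃ τ : Equiv.Perm (Fin n), (∀ i : Fin m, τ (Fin.castLE h i) = Fin.castLE h (σ i)) ∧
      ∀ v : V m, transitionMap φ h (ρ m σ v) = ρ n τ (transitionMap φ h v) := by
  induction n, h using Nat.le_induction with
  | base =>
      refine ⟨σ, fun i => rfl, fun v => ?_⟩
      rw [transitionMap_refl]; rfl
  | succ n hn ih =>
      obtain ⟨τ, hτ1, hτ2⟩ := ih
      refine ⟨extPerm τ, fun i => ?_, fun v => ?_⟩
      · have h1 : Fin.castLE (Nat.le_succ_of_le hn) i = Fin.castSucc (Fin.castLE hn i) := rfl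
        rw [h1, extPerm_castSucc, hτ1]; rfl
      · rw [transitionMap_succ φ hn (Nat.le_succ_of_le hn)]
        simp only [LinearMap.comp_apply]
        rw [hτ2, hconsistent]

lemma le_of_emb {m n : ℕ} (f : Fin m ↪ Fin n) : m ≤ n := by
  simpa using Fintype.card_le_of_embedding f

lemma exists_perm_of_emb {m n : ℕ} (f : Fin m ↪ Fin n) :
    ∃ σ : Equiv.Perm (Fin n), ∀ i : Fin m, σ (Fin.castLE (le_of_emb f) i) = f i := by
  classical
  have h := le_of_emb f
  let e1 : {x : Fin n // (x : ℕ) < m} ≃ Fin m :=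
    { toFun := fun x => ⟨x.1, x.2⟩
      invFun := fun i => ⟨Fin.castLE h i, i.2⟩
      left_inv := fun x => rfl
      right_inv := fun i => rfl }
  let e2 : Fin m ≃ Set.range f := Equiv.ofInjective f f.injective
  let e : {x : Fin n // (x : ℕ) < m} ≃ {x : Fin n // x ∈ Set.range f} := e1.trans e2
  refine ⟨e.extendSubtype, fun i => ?_⟩
  have hi : ((Fin.castLE h i : Fin n) : ℕ) < m := i.2
  rw [Equiv.extendSubtype_apply_of_mem e _ hi]
  rfl

end Aux

/-- A consistent sequence of `S_n`-representations `(V_n, ρ_n, φ_n)` extends to an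
FI-module (i.e. the maps extend to a functor on the category of finite sets and
injections, restricting to the given `S_n`-actions and the given maps `φ_n` on the
standard inclusions) if and only if for all `m ≤ n`, any two permutations
`σ₁, σ₂ ∈ S_n` agreeing on `{1,…,m}` act identically on the image of `V_m` in `V_n`. -/
theorem consistentSeq_extends_to_FIModule_iff
    (𝕜 : Type*) [Field 𝕜] (V : ℕ → Type*)
    [∀ n, AddCommGroup (V n)] [∀ n, Module 𝕜 (V n)]
    (ρ : ∀ n, Representation 𝕜 (Equiv.Perm (Fin n)) (V n))
    (φ : ∀ n, V n →ₗ[𝕜] V (n + 1))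
    (hconsistent : ∀ (n : ℕ) (σ : Equiv.Perm (Fin n)) (v : V n),
      φ n (ρ n σ v) = ρ (n + 1) (extPerm σ) (φ n v)) :
    (∃ F : ∀ m n : ℕ, (Fin m ↪ Fin n) → (V m →ₗ[𝕜] V n),
      (∀ n, F n n (Function.Embedding.refl (Fin n)) = LinearMap.id) ∧
      (∀ (a b c : ℕ) (f : Fin a ↪ Fin b) (g : Fin b ↪ Fin c),
        F a c (f.trans g) = (F b c g).comp (F a b f)) ∧
      (∀ (n : ℕ) (σ : Equiv.Perm (Fin n)), F n n σ.toEmbedding = ρ n σ) ∧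
      (∀ n : ℕ, F n (n + 1) Fin.castSuccEmb = φ n)) ↔
    (∀ (m n : ℕ) (h : m ≤ n) (σ₁ σ₂ : Equiv.Perm (Fin n)),
      (∀ i : Fin n, (i : ℕ) < m → σ₁ i = σ₂ i) →
      ∀ v : V m, ρ n σ₁ (transitionMap φ h v) = ρ n σ₂ (transitionMap φ h v)) := by
  constructor
  · rintro ⟨F, hrefl, hcomp, hperm, hsucc⟩ m n h σ₁ σ₂ hagree v
    -- transitionMap = F on castLEEmb
    have key : ∀ {n : ℕ} (h : m ≤ n), transitionMap φ h = F m n (Fin.castLEEmb h) := by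
      intro n h
      induction n, h using Nat.le_induction with
      | base =>
          rw [transitionMap_refl, ← hrefl m]
          congr 1
      | succ k hk ih =>
          rw [transitionMap_succ φ hk (Nat.le_succ_of_le hk), ih, ← hsucc k, ← hcomp]
          congr 1
    have h1 : ∀ σ : Equiv.Perm (Fin n),
        ρ n σ (transitionMap φ h v) = F m n ((Fin.castLEEmb h).trans σ.toEmbedding) v := by
      intro σ
      rw [hcomp m n n (Fin.castLEEmb h) σ.toEmbedding, LinearMap.comp_apply, hperm, ← key h]
    rw [h1 σ₁, h1 σ₂]
    have he : (Fin.castLEEmb h).trans σ₁.toEmbedding = (Fin.castLEEmb h).trans σ₂.toEmbedding :=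
      Function.Embedding.ext fun i => hagree (Fin.castLE h i) i.2
    rw [he]
  · intro hR
    classical
    -- construction of F
    let F : ∀ m n : ℕ, (Fin m ↪ Fin n) → (V m →ₗ[𝕜] V n) := fun m n f =>
      (ρ n (Classical.choose (exists_perm_of_emb f))).comp (transitionMap φ (le_of_emb f))
    have hF : ∀ {m n : ℕ} (f : Fin m ↪ Fin n) (h : m ≤ n) (σ : Equiv.Perm (Fin n)),
        (∀ i : Fin m, σ (Fin.castLE h i) = f i) →
        ∀ v : V m, F m n f v = ρ n σ (transitionMap φ h v) := by
      intro m n f h σ hσ v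
      have hspec := Classical.choose_spec (exists_perm_of_emb f)
      set τ := Classical.choose (exists_perm_of_emb f)
      have : ∀ i : Fin n, (i : ℕ) < m → τ i = σ i := by
        intro i hi
        have : i = Fin.castLE h ⟨i, hi⟩ := rfl
        rw [this, hspec, hσ]
      have := hR m n h τ σ this v
      simpa [F] using this
    refine ⟨F, ?_, ?_, ?_, ?_⟩
    · intro n
      ext v
      rw [hF (Function.Embedding.refl (Fin n)) (le_refl n) 1 (fun i => rfl) v,
        transitionMap_refl]
      simp
    · intro a b c f g
      ext v
      have hσf := Classical.choose_spec (exists_perm_of_emb f)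
      set σf := Classical.choose (exists_perm_of_emb f) with hσfdef
      have hσg := Classical.choose_spec (exists_perm_of_emb g)
      set σg := Classical.choose (exists_perm_of_emb g) with hσgdef
      have hab := le_of_emb f
      have hbc := le_of_emb g
      obtain ⟨τ, hτ1, hτ2⟩ := exists_perm_ext φ ρ hconsistent hbc σf
      have step : (F b c g).comp (F a b f) v = ρ c (σg * τ) (transitionMap φ (hab.trans hbc) v) := by
        simp only [LinearMap.comp_apply]
        rw [hF f hab σf hσf v, hF g hbc σg hσg _]
        rw [hτ2, transitionMap_trans φ hab hbc (hab.trans hbc)]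
        simp [mul_assoc]
      rw [step]
      rw [hF (f.trans g) (hab.trans hbc) (σg * τ) ?_ v]
      intro i
      have h1 : Fin.castLE (hab.trans hbc) i = Fin.castLE hbc (Fin.castLE hab i) := rfl
      simp only [Equiv.Perm.mul_apply, h1, hτ1]
      rw [hσf, hσg]
      rfl
    · intro n σ
      ext v
      rw [hF σ.toEmbedding (le_refl n) σ (fun i => rfl) v, transitionMap_refl]
      rfl
    · intro n
      ext v
      rw [hF Fin.castSuccEmb (Nat.le_succ n) 1 (fun i => rfl) v,
        transitionMap_succ φ (le_refl n) (Nat.le_succ n), transitionMap_refl]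
      simp
end

section
/- The ℂ-span of the image of the diagonal action of the symmetric group S_n on (ℂ^n)^{⊗k} (via the permutation representation on ℂ^n) has centralizer in End((ℂ^n)^{⊗k}) of dimension equal to the number of set partitions of {1,...,2k} into at most n blocks. -/
open scoped TensorProduct

/-- The `k`-fold tensor power `(ℂ^n)^{⊗k}`. -/
def TPow (n k : ℕ) : Type := ⨂[ℂ] (_ : Fin k), (Fin n → ℂ)

noncomputable instance (n k : ℕ) : AddCommGroup (TPow n k) :=
  inferInstanceAs (AddCommGroup (⨂[ℂ] (_ : Fin k), (Fin n → ℂ)))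

noncomputable instance (n k : ℕ) : Module ℂ (TPow n k) :=
  inferInstanceAs (Module ℂ (⨂[ℂ] (_ : Fin k), (Fin n → ℂ)))

/-- The diagonal action of `σ ∈ S_n` on `(ℂ^n)^{⊗k}`, via the permutation representation
of `S_n` on `ℂ^n = Fin n → ℂ`. -/
noncomputable def diagPermAction (n k : ℕ) (σ : Equiv.Perm (Fin n)) :
    Module.End ℂ (TPow n k) :=
  PiTensorProduct.map fun _ => LinearMap.funLeft ℂ ℂ ⇑σ⁻¹

/-!
The tensor basis `e_f` of `(ℂ^n)^{⊗k}`, `f : Fin k → Fin n`, is permuted by `σ ∈ S_n` via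
`f ↦ σ ∘ f`. Hence an endomorphism commutes with `S_n` iff its matrix `(T_{f,g})` is constant on
the `S_n`-orbits of pairs `(f, g)`, and the centralizer has dimension the number of these orbits.
A pair `(f, g)` is one map `Fin (2k) → Fin n`, and two such maps lie in the same orbit iff they
have the same kernel; the kernels that occur are exactly the partitions of `Fin (2k)` into at
most `n` blocks.
-/

open MulAction Equiv

theorem Subalgebra.centralizer_coe_span {R A : Type*} [CommSemiring R] [Semiring A] [Algebra R A]
    (s : Set A) : centralizer R (Submodule.span R s : Set A) = centralizer R s := by
  refine le_antisymm (centralizer_le R _ _ Submodule.subset_span) ?_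
  have hspan : (Submodule.span R s : Set A) ⊆ Set.centralizer (Set.centralizer s) :=
    Submodule.span_le (p := toSubmodule (centralizer R (Set.centralizer s))).2
      Set.subset_centralizer_centralizer
  calc centralizer R s = centralizer R (Set.centralizer (Set.centralizer s)) :=
        (centralizer_centralizer_centralizer R).symm
    _ ≤ _ := centralizer_le R _ _ hspan

namespace MulAction

variable {G X Y : Type*} [Group G] [MulAction G X] [MulAction G Y]

def orbitRelQuotientCongr (e : X ≃ Y) (he : ∀ (g : G) x, e (g • x) = g • e x) :
    orbitRel.Quotient G X ≃ orbitRel.Quotient G Y :=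
  Quotient.congr e fun x y => by
    simp only [orbitRel_apply, mem_orbit_iff, ← he, e.apply_eq_iff_eq]

theorem mem_range_funLeft_orbitRel_iff (R : Type*) [Semiring R] (f : X → R) :
    f ∈ LinearMap.range (LinearMap.funLeft R R (Quotient.mk (orbitRel G X))) ↔
      ∀ (g : G) x, f (g • x) = f x := by
  constructor
  · rintro ⟨h, rfl⟩ g x
    exact congrArg h (Quotient.sound (mem_orbit x g))
  · intro hf
    refine ⟨Quotient.lift f ?_, rfl⟩
    rintro x _ ⟨g, rfl⟩
    exact hf g _

end MulAction

namespace Module.Basis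

variable {G ι R M : Type*} [Group G] [MulAction G ι] [CommSemiring R] [AddCommMonoid M]
  [Module R M] (b : Basis ι R M) {ρ : G → Module.End R M}

theorem repr_apply_smul (hρ : ∀ g i, ρ g (b i) = b (g • i)) (g : G) (x : M) (i : ι) :
    b.repr (ρ g x) (g • i) = b.repr x i := by
  have : Finsupp.lapply (g • i) ∘ₗ b.repr.toLinearMap ∘ₗ ρ g =
      Finsupp.lapply i ∘ₗ b.repr.toLinearMap :=
    b.ext fun j => by simp [hρ, Finsupp.single_apply_left (MulAction.injective g)]
  exact LinearMap.congr_fun this x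

variable [Fintype ι] [DecidableEq ι]

theorem commute_iff_toMatrix_smul_smul (hρ : ∀ g i, ρ g (b i) = b (g • i)) (g : G)
    (T : Module.End R M) :
    Commute (ρ g) T ↔
      ∀ i j, LinearMap.toMatrix b b T (g • i) (g • j) = LinearMap.toMatrix b b T i j := by
  simp only [LinearMap.toMatrix_apply]
  constructor
  · intro h i j
    rw [← hρ, ← Module.End.mul_apply, ← h.eq, Module.End.mul_apply, b.repr_apply_smul hρ]
  · intro h
    refine b.ext fun j => b.ext_elem fun l => ?_
    obtain ⟨i, rfl⟩ : ∃ i, g • i = l := ⟨g⁻¹ • l, smul_inv_smul g l⟩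
    simp only [Module.End.mul_apply, b.repr_apply_smul hρ, hρ, h]

noncomputable def uncurriedMatrixEquiv : (ι × ι → R) ≃ₗ[R] Module.End R M :=
  LinearEquiv.curry R R ι ι ≪≫ₗ Matrix.ofLinearEquiv R ≪≫ₗ Matrix.toLin b b

theorem toSubmodule_centralizer_range (hρ : ∀ g i, ρ g (b i) = b (g • i)) :
    Subalgebra.toSubmodule (Subalgebra.centralizer R (Set.range ρ)) =
      (LinearMap.range (LinearMap.funLeft R R (Quotient.mk (orbitRel G (ι × ι))))).map
        (b.uncurriedMatrixEquiv : (ι × ι → R) →ₗ[R] Module.End R M) := by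
  ext T
  rw [Submodule.mem_map_equiv, mem_range_funLeft_orbitRel_iff, Subalgebra.mem_toSubmodule,
    Subalgebra.mem_centralizer_iff, Set.forall_mem_range]
  refine forall_congr' fun g => (b.commute_iff_toMatrix_smul_smul hρ g T).trans ?_
  simp only [Prod.forall, Prod.smul_mk]
  exact Iff.rfl

end Module.Basis

theorem Module.Basis.finrank_centralizer_range {G ι R M : Type*} [Group G] [MulAction G ι]
    [Fintype ι] [DecidableEq ι] [CommRing R] [StrongRankCondition R] [AddCommGroup M]
    [Module R M] (b : Basis ι R M) {ρ : G → Module.End R M}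
    (hρ : ∀ g i, ρ g (b i) = b (g • i)) :
    Module.finrank R (Subalgebra.centralizer R (Set.range ρ)) =
      Nat.card (orbitRel.Quotient G (ι × ι)) := by
  have := Fintype.ofFinite (orbitRel.Quotient G (ι × ι))
  rw [← Subalgebra.finrank_toSubmodule, b.toSubmodule_centralizer_range hρ,
    LinearEquiv.finrank_map_eq, LinearMap.finrank_range_of_inj
      (LinearMap.funLeft_injective_of_surjective _ _ _ Quotient.mk_surjective),
    Module.finrank_fintype_fun_eq_card, Nat.card_eq_fintype_card]

namespace Setoid

variable {α β : Type*}

theorem ker_perm_smul (σ : Perm β) (f : α → β) : ker (σ • f) = ker f :=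
  Setoid.ext fun _ _ => σ.injective.eq_iff

theorem exists_perm_smul_eq_of_ker_eq [Finite β] {f g : α → β} (h : ker f = ker g) :
    ∃ σ : Perm β, σ • f = g := by
  classical
  -- `f a ↦ g a` is a well-defined bijection of the ranges; extend it to a permutation of `β`.
  let e : Set.range f ≃ Set.range g := (quotientKerEquivRange f).symm.trans
    ((Quotient.congrRight fun _ _ => by rw [h]).trans (quotientKerEquivRange g))
  refine ⟨e.extendSubtype, funext fun a => ?_⟩
  rw [Pi.smul_apply, Perm.smul_def, extendSubtype_apply_of_mem e (f a) ⟨a, rfl⟩]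
  have : (⟨f a, a, rfl⟩ : Set.range f) = quotientKerEquivRange f ⟦a⟧ := rfl
  rw [this, Equiv.trans_apply, Equiv.symm_apply_apply]
  rfl

theorem card_quotient_ker_le [Finite β] (f : α → β) :
    Nat.card (Quotient (ker f)) ≤ Nat.card β :=
  (Nat.card_congr (quotientKerEquivRange f)).trans_le (Finite.card_subtype_le _)

noncomputable def orbitRelQuotientPermEquiv [Finite α] [Finite β] :
    orbitRel.Quotient (Perm β) (α → β) ≃
      {r : Setoid α // Nat.card (Quotient r) ≤ Nat.card β} := by
  refine .ofBijective (Quotient.lift (fun f => ⟨ker f, card_quotient_ker_le f⟩) ?_) ⟨?_, ?_⟩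
  · rintro _ f ⟨σ, rfl⟩
    exact Subtype.ext (ker_perm_smul σ f)
  · rintro ⟨f⟩ ⟨g⟩ hfg
    obtain ⟨σ, hσ⟩ := exists_perm_smul_eq_of_ker_eq (congrArg Subtype.val hfg).symm
    exact Quotient.sound ⟨σ, hσ⟩
  · rintro ⟨r, hr⟩
    have := Fintype.ofFinite α
    have := Fintype.ofFinite β
    have := Fintype.ofFinite (Quotient r)
    rw [Nat.card_eq_fintype_card, Nat.card_eq_fintype_card] at hr
    obtain ⟨j⟩ := Function.Embedding.nonempty_of_card_le hr
    refine ⟨⟦j ∘ Quotient.mk r⟧, Subtype.ext ?_⟩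
    exact Setoid.ext fun a b => j.injective.eq_iff.trans Quotient.eq

end Setoid

theorem Fin.appendEquiv_smul {G β : Type*} [SMul G β] {m k : ℕ} (g : G)
    (pq : (Fin m → β) × (Fin k → β)) : appendEquiv m k (g • pq) = g • appendEquiv m k pq := by
  funext i
  refine Fin.addCases (fun i => ?_) (fun i => ?_) i <;> simp

theorem LinearMap.funLeft_symm_single {R m n : Type*} [Semiring R] [DecidableEq m]
    [DecidableEq n] (e : m ≃ n) (i : m) (r : R) :
    LinearMap.funLeft R R e.symm (Pi.single i r) = Pi.single (e i) r := by
  ext j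
  simp [LinearMap.funLeft_apply, Pi.single_apply, Equiv.symm_apply_eq]

noncomputable def TPow.basis (n k : ℕ) : Module.Basis (Fin k → Fin n) ℂ (TPow n k) :=
  Basis.piTensorProduct fun _ => Pi.basisFun ℂ (Fin n)

theorem diagPermAction_basis (n k : ℕ) (σ : Perm (Fin n)) (f : Fin k → Fin n) :
    diagPermAction n k σ (TPow.basis n k f) = TPow.basis n k (σ • f) := by
  change PiTensorProduct.map _ (Basis.piTensorProduct _ f) = Basis.piTensorProduct _ (σ • f)
  simp only [Basis.piTensorProduct_apply, PiTensorProduct.map_tprod, Pi.basisFun_apply]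
  congr 1
  funext i
  exact LinearMap.funLeft_symm_single σ (f i) 1

/-- The centralizer in `End((ℂ^n)^{⊗k})` of the `ℂ`-span of the image of the diagonal
action of `S_n` has dimension equal to the number of set partitions of `{1,…,2k}` into at
most `n` blocks. -/
theorem dim_centralizer_of_diagonal_symmetric_action (n k : ℕ) :
    Module.finrank ℂ (Subalgebra.centralizer ℂ
        ((Submodule.span ℂ (Set.range (diagPermAction n k)) :
          Submodule ℂ (Module.End ℂ (TPow n k))) : Set (Module.End ℂ (TPow n k)))) =
      Nat.card {R : Setoid (Fin (2 * k)) // Nat.card (Quotient R) ≤ n} := by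
  rw [Subalgebra.centralizer_coe_span,
    (TPow.basis n k).finrank_centralizer_range (diagPermAction_basis n k),
    Nat.card_congr (orbitRelQuotientCongr (Fin.appendEquiv k k) Fin.appendEquiv_smul),
    Nat.card_congr Setoid.orbitRelQuotientPermEquiv, Nat.card_fin, two_mul]
end

section
/- For n ≥ 2k, the partition algebra P_k(n) acts faithfully on (ℂ^n)^{⊗k}, i.e., the representation P_k(n) → End((ℂ^n)^{⊗k}) is injective. -/
/-!
The matrix coefficient of `partitionAlgebraRep n k c` at a pair of multi-indices `(f, g)` is the
sum of `c d` over the diagrams `d` refining the kernel of the labelling `(f, g)` of the `2k`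
vertices, i.e. the zeta transform of `c` in the refinement order evaluated at that kernel. When
`n ≥ 2k` every set partition of the `2k` vertices is such a kernel, so if `c` acts by zero its
zeta transform vanishes identically, and by triangularity `c = 0`.
-/

open scoped Classical

/-- The operator on `(ℂ^n)^{⊗k}` (realized as functions on multi-indices
`Fin k → Fin n`) associated to a partition diagram `d` on `2k` vertices: its matrix entry
at a pair of multi-indices is `1` exactly when the combined labelling of the `2k`
vertices is constant on the blocks of `d`, and `0` otherwise. -/
noncomputable def diagramAction (n k : ℕ) (d : Setoid (Fin k ⊕ Fin k)) :
    ((Fin k → Fin n) → ℂ) →ₗ[ℂ] ((Fin k → Fin n) → ℂ) :=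
  Matrix.toLin' (Matrix.of fun f g : Fin k → Fin n =>
    if ∀ x y : Fin k ⊕ Fin k, d.r x y → Sum.elim f g x = Sum.elim f g y then (1 : ℂ) else 0)

/-- The representation of the partition algebra `P_k(n)` (free on diagrams, i.e. set
partitions of the `2k` vertices) on `(ℂ^n)^{⊗k}`, extending `diagramAction` linearly. -/
noncomputable def partitionAlgebraRep (n k : ℕ) :
    (Setoid (Fin k ⊕ Fin k) →₀ ℂ) →ₗ[ℂ] (((Fin k → Fin n) → ℂ) →ₗ[ℂ] ((Fin k → Fin n) → ℂ)) :=
  Finsupp.linearCombination ℂ (diagramAction n k)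

theorem Setoid.exists_ker_eq_of_card_le {α β : Type*} [Fintype α] [Fintype β] (r : Setoid α)
    (h : Fintype.card α ≤ Fintype.card β) : ∃ f : α → β, Setoid.ker f = r := by
  obtain ⟨emb⟩ := Function.Embedding.nonempty_of_card_le ((Fintype.card_quotient_le r).trans h)
  exact ⟨emb ∘ Quotient.mk r, Setoid.ext fun _ _ => emb.injective.eq_iff.trans Quotient.eq⟩

/-- A minimal element of the support would be the only term of its own partial sum. -/
theorem Finsupp.eq_zero_of_forall_sum_le_eq_zero {α M : Type*} [PartialOrder α] [AddCommMonoid M]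
    {c : α →₀ M} (h : ∀ e, ∑ d ∈ c.support with d ≤ e, c d = 0) : c = 0 := by
  by_contra hc
  obtain ⟨e, he, hmin⟩ := Finset.exists_minimal (Finsupp.support_nonempty_iff.mpr hc)
  have hsum : ∑ d ∈ c.support with d ≤ e, c d = c e := by
    refine Finset.sum_eq_single_of_mem e (Finset.mem_filter.mpr ⟨he, le_rfl⟩) fun d hd hne => ?_
    obtain ⟨hd, hle⟩ := Finset.mem_filter.mp hd
    exact absurd (le_antisymm hle (hmin hd hle)) hne
  exact Finsupp.mem_support_iff.mp he (hsum ▸ h e)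

theorem diagramAction_single_apply (n k : ℕ) (d : Setoid (Fin k ⊕ Fin k)) (f g : Fin k → Fin n) :
    diagramAction n k d (Pi.single g 1) f = if d ≤ Setoid.ker (Sum.elim f g) then 1 else 0 := by
  simp only [diagramAction, Matrix.toLin'_apply, Matrix.mulVec_single_one, Matrix.col_apply,
    Matrix.of_apply, Setoid.le_def, Setoid.ker_def]

theorem partitionAlgebraRep_single_apply (n k : ℕ) (c : Setoid (Fin k ⊕ Fin k) →₀ ℂ)
    (f g : Fin k → Fin n) :
    partitionAlgebraRep n k c (Pi.single g 1) f =
      ∑ d ∈ c.support with d ≤ Setoid.ker (Sum.elim f g), c d := by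
  simp only [partitionAlgebraRep, Finsupp.linearCombination_apply, Finsupp.sum,
    LinearMap.coe_sum, Finset.sum_apply, LinearMap.smul_apply, Pi.smul_apply,
    diagramAction_single_apply, smul_eq_mul, mul_ite, mul_one, mul_zero, Finset.sum_ite,
    Finset.sum_const_zero, add_zero]

/-- For `n ≥ 2k`, the partition algebra `P_k(n)` acts faithfully on `(ℂ^n)^{⊗k}`: the
representation `P_k(n) → End((ℂ^n)^{⊗k})` is injective. -/
theorem partitionAlgebra_faithful (n k : ℕ) (h : 2 * k ≤ n) :
    Function.Injective (partitionAlgebraRep n k) := by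
  refine (injective_iff_map_eq_zero _).mpr fun c hc => ?_
  refine Finsupp.eq_zero_of_forall_sum_le_eq_zero fun e => ?_
  obtain ⟨F, rfl⟩ := Setoid.exists_ker_eq_of_card_le (β := Fin n) e (by simpa [two_mul] using h)
  rw [← Sum.elim_comp_inl_inr F, ← partitionAlgebraRep_single_apply, hc]
  rfl
end

section
/- For n ≥ 2k, the multiplicity of the irreducible S_n-module S^{λ̄} in (ℂ^n)^{⊗k} (with ℂ^n the permutation representation) depends only on λ and k, not on n, where λ̄ = (n − |λ|, λ₁, λ₂, ...). -/
/-- The action of `S_n` on `(ℂ^n)^{⊗k}`, realized as the free vector space on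
multi-indices `Fin k → Fin n` with the diagonal (pointwise) permutation action. -/
noncomputable def tensorPermRep (n k : ℕ) :
    Representation ℂ (Equiv.Perm (Fin n)) ((Fin k → Fin n) →₀ ℂ) :=
  { toFun := fun g => Finsupp.lmapDomain ℂ ℂ (g • ·)
    map_one' := by ext; simp
    map_mul' := fun x y => by ext; simp [mul_smul] }

/-- The sum over the column group of a tableau `T` of shape `Λ` (the permutations of
`{1,…,n}` preserving every column of `T`), with signs, in the group algebra. -/
noncomputable def colGroupSum {n : ℕ} {Λ : YoungDiagram} (T : Fin n ≃ Λ.cells) :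
    MonoidAlgebra ℂ (Equiv.Perm (Fin n)) :=
  ∑ σ : Equiv.Perm (Fin n),
    if ∀ i, ((T (σ i)) : ℕ × ℕ).2 = ((T i) : ℕ × ℕ).2 then
      ((Equiv.Perm.sign σ : ℤ) : ℂ) • MonoidAlgebra.single σ (1 : ℂ)
    else 0

/-- The sum over the row group of a tableau `T` of shape `Λ` (the permutations of
`{1,…,n}` preserving every row of `T`) in the group algebra. -/
noncomputable def rowGroupSum {n : ℕ} {Λ : YoungDiagram} (T : Fin n ≃ Λ.cells) :
    MonoidAlgebra ℂ (Equiv.Perm (Fin n)) :=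
  ∑ τ : Equiv.Perm (Fin n),
    if ∀ i, ((T (τ i)) : ℕ × ℕ).1 = ((T i) : ℕ × ℕ).1 then
      MonoidAlgebra.single τ (1 : ℂ)
    else 0

/-- The Young symmetrizer of a tableau `T`. -/
noncomputable def youngSymmetrizer {n : ℕ} {Λ : YoungDiagram} (T : Fin n ≃ Λ.cells) :
    MonoidAlgebra ℂ (Equiv.Perm (Fin n)) :=
  colGroupSum T * rowGroupSum T

/-- The multiplicity of the irreducible `S_n`-module `S^Λ` in `(ℂ^n)^{⊗k}`: in
characteristic zero it equals the dimension of the image of the Young symmetrizer of a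
tableau of shape `Λ` acting on `(ℂ^n)^{⊗k}`. -/
noncomputable def tensorMultiplicity (n k : ℕ) {Λ : YoungDiagram} (T : Fin n ≃ Λ.cells) : ℕ :=
  Module.finrank ℂ (LinearMap.range ((tensorPermRep n k).asAlgebraHom (youngSymmetrizer T)))

/-!
The image of the Young symmetrizer `e_T = c_T r_T` is spanned by the vectors `c_T s`, where `s` runs
over the sums of basis vectors along the row-group orbits of `k`-tuples. These orbits are classified
by the *pattern* of a tuple (the rows of its cells and which of its entries coincide), and patterns
make sense for tableaux of every size. So for `n ≤ m` both `e_{Tn} V_n` and `e_{Tm} V_m` are images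
of the space spanned by the `k`-tuples of indices of `Tm`, under the maps sending a tuple to the
`c_T`-image of the orbit sum with the pattern of its cells; it suffices that these two maps have
the same kernel.

Their coefficients are signed sums over column groups. Beyond column `|λ|` every column of `λ̄` is a
single cell of the first row, so the column groups of `Tn` and `Tm` agree, and so do the
coefficients of the two maps at tuples inside the smaller diagram. A coefficient of the second map
at a tuple leaving the smaller diagram either vanishes, because two cells of one of the first `k`
columns are unused and their transposition cancels the sum in pairs, or, since `n ≥ 2k` leaves
enough room, equals the coefficient at a tuple moved into the smaller diagram by transpositions of
first-row cells beyond column `k`.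
-/

namespace TensorStability

open Finset Equiv Equiv.Perm

open scoped Classical

section FiberGroup

variable {α β : Type*}

def fiberGroup (c : α → β) : Subgroup (Perm α) where
  carrier := {σ | ∀ i, c (σ i) = c i}
  mul_mem' {σ τ} hσ hτ i := (hσ (τ i)).trans (hτ i)
  one_mem' _ := rfl
  inv_mem' {σ} hσ i := by simpa using (hσ (σ⁻¹ i)).symm

lemma swap_mem_fiberGroup [DecidableEq α] {c : α → β} {a b : α} (h : c a = c b) :
    swap a b ∈ fiberGroup c := by
  intro i
  rcases eq_or_ne i a with rfl | hia
  · simp [h]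
  rcases eq_or_ne i b with rfl | hib
  · simp [h]
  · rw [swap_apply_of_ne_of_ne hia hib]

lemma exists_mem_fiberGroup_comp_eq {ι : Type*} [Fintype ι] [DecidableEq α] {c : α → β}
    {g g' : ι → α} (hc : ∀ p, c (g p) = c (g' p)) (hg : ∀ p q, g p = g q ↔ g' p = g' q) :
    ∃ τ ∈ fiberGroup c, ⇑τ ∘ g = g' := by
  induction hN : #{p | g p ≠ g' p} using Nat.strong_induction_on generalizing g with
  | _ N ih =>
  by_cases hgg : g = g'
  · exact ⟨1, one_mem _, by simp [hgg]⟩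
  obtain ⟨p, hp⟩ := Function.ne_iff.mp hgg
  set t := swap (g p) (g' p)
  have ht : t ∈ fiberGroup c := swap_mem_fiberGroup (hc p)
  have hagree : ∀ q, g q = g' q → t (g q) = g' q := fun q hq => by
    have h1 : g q ≠ g p := fun h => hp (by rw [← h, hq, (hg q p).mp h])
    have h2 : g q ≠ g' p := fun h => hp (((hg q p).mpr (hq ▸ h)).symm.trans h)
    rw [swap_apply_of_ne_of_ne h1 h2, hq]
  have hsub : ({q | t (g q) ≠ g' q} : Finset ι) ⊆ ({q | g q ≠ g' q} : Finset ι).erase p := by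
    intro q hq
    simp only [mem_filter, mem_univ, true_and, mem_erase] at hq ⊢
    exact ⟨fun hqp => hq (by simp [hqp, t]), fun h => hq (hagree q h)⟩
  have hp' : p ∈ ({q | g q ≠ g' q} : Finset ι) := by simpa using hp
  have hlt : #{q | t (g q) ≠ g' q} < N := by
    have := card_le_card hsub
    have := card_erase_of_mem hp'
    have := card_pos.mpr ⟨p, hp'⟩
    omega
  obtain ⟨τ, hτ, hτg⟩ := ih _ hlt (g := ⇑t ∘ g) (fun q => (ht (g q)).trans (hc q))
    (fun q r => t.injective.eq_iff.trans (hg q r)) rfl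
  exact ⟨τ * t, mul_mem hτ ht, by rw [Perm.coe_mul, Function.comp_assoc, hτg]⟩

end FiberGroup

lemma exists_viaFintypeEmbedding_eq {α β : Type*} [Fintype α] [DecidableEq β] [Fintype β]
    (ι : α ↪ β) {σ' : Perm β} (hσ' : ∀ b ∉ Set.range ι, σ' b = b) :
    ∃ σ : Perm α, σ.viaFintypeEmbedding ι = σ' := by
  have hrange (a : α) : ∃ a', σ' (ι a) = ι a' := by
    by_contra! h
    have hout : σ' (ι a) ∉ Set.range ι := fun ⟨a', ha'⟩ => h a' ha'.symm
    exact hout ⟨a, σ'.injective (hσ' _ hout).symm⟩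
  choose φ hφ using hrange
  have hφ_inj : Function.Injective φ := fun a b hab =>
    ι.injective (σ'.injective (by rw [hφ, hφ, hab]))
  refine ⟨Equiv.ofBijective φ (Finite.injective_iff_bijective.mp hφ_inj), Equiv.ext fun b => ?_⟩
  by_cases hb : b ∈ Set.range ι
  · obtain ⟨a, rfl⟩ := hb
    rw [Perm.viaFintypeEmbedding_apply_image, hφ]
    rfl
  · rw [Perm.viaFintypeEmbedding_apply_notMem_range _ _ hb, hσ' b hb]

/-- On the cells of a tableau the classes of `PatternEquiv` are the row-group orbits
(`exists_mem_rowGroup_comp_eq`); unlike orbits, they can be compared across tableaux of different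
sizes. -/
def PatternEquiv {k : ℕ} (h h' : Fin k → ℕ × ℕ) : Prop :=
  (∀ p, (h p).1 = (h' p).1) ∧ ∀ p q, h p = h q ↔ h' p = h' q

namespace PatternEquiv

variable {k : ℕ} {h h' h'' : Fin k → ℕ × ℕ}

lemma symm (H : PatternEquiv h h') : PatternEquiv h' h :=
  ⟨fun p => (H.1 p).symm, fun p q => (H.2 p q).symm⟩

lemma trans (H : PatternEquiv h h') (H' : PatternEquiv h' h'') : PatternEquiv h h'' :=
  ⟨fun p => (H.1 p).trans (H'.1 p), fun p q => (H.2 p q).trans (H'.2 p q)⟩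

end PatternEquiv

section Tableau

variable {n k : ℕ} {Λ : YoungDiagram} (T : Fin n ≃ Λ.cells)

def rowOf (i : Fin n) : ℕ := (T i : ℕ × ℕ).1

def colOf (i : Fin n) : ℕ := (T i : ℕ × ℕ).2

def rowGroup : Subgroup (Perm (Fin n)) := fiberGroup (rowOf T)

def colGroup : Subgroup (Perm (Fin n)) := fiberGroup (colOf T)

def cellsOf (g : Fin k → Fin n) : Fin k → ℕ × ℕ := fun p => T (g p)

lemma tensorPermRep_single (σ : Perm (Fin n)) (g : Fin k → Fin n) (c : ℂ) :
    tensorPermRep n k σ (Finsupp.single g c) = Finsupp.single (⇑σ ∘ g) c :=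
  Finsupp.mapDomain_single

lemma tensorPermRep_apply_apply (σ : Perm (Fin n)) (y : (Fin k → Fin n) →₀ ℂ)
    (g : Fin k → Fin n) : tensorPermRep n k σ y g = y (⇑σ⁻¹ ∘ g) :=
  Finsupp.mapDomain_equiv_apply (f := MulAction.toPerm σ) y g

lemma asAlgebraHom_colGroupSum (y : (Fin k → Fin n) →₀ ℂ) :
    (tensorPermRep n k).asAlgebraHom (colGroupSum T) y =
      ∑ σ ∈ {σ | σ ∈ colGroup T}, ((sign σ : ℤ) : ℂ) • tensorPermRep n k σ y := by
  rw [colGroupSum, map_sum, LinearMap.sum_apply, sum_filter]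
  refine sum_congr rfl fun σ _ => ?_
  rw [apply_ite (fun a => (tensorPermRep n k).asAlgebraHom a y)]
  congr 1
  simp

lemma asAlgebraHom_rowGroupSum (y : (Fin k → Fin n) →₀ ℂ) :
    (tensorPermRep n k).asAlgebraHom (rowGroupSum T) y =
      ∑ τ ∈ {τ | τ ∈ rowGroup T}, tensorPermRep n k τ y := by
  rw [rowGroupSum, map_sum, LinearMap.sum_apply, sum_filter]
  refine sum_congr rfl fun τ _ => ?_
  rw [apply_ite (fun a => (tensorPermRep n k).asAlgebraHom a y)]
  congr 1
  simp

lemma asAlgebraHom_colGroupSum_apply (y : (Fin k → Fin n) →₀ ℂ) (g : Fin k → Fin n) :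
    (tensorPermRep n k).asAlgebraHom (colGroupSum T) y g =
      ∑ σ ∈ {σ | σ ∈ colGroup T}, ((sign σ : ℤ) : ℂ) * y (⇑σ ∘ g) := by
  rw [asAlgebraHom_colGroupSum, Finsupp.finsetSum_apply]
  refine sum_nbij' (·⁻¹) (·⁻¹) ?_ ?_ (fun _ _ => inv_inv _) (fun _ _ => inv_inv _) ?_
  · simp
  · simp
  · intro σ _
    simp [tensorPermRep_apply_apply]

lemma patternEquiv_cellsOf_iff {g g' : Fin k → Fin n} :
    PatternEquiv (cellsOf T g) (cellsOf T g') ↔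
      (∀ p, rowOf T (g p) = rowOf T (g' p)) ∧ ∀ p q, g p = g q ↔ g' p = g' q := by
  simp only [PatternEquiv, cellsOf, ← Subtype.ext_iff, T.injective.eq_iff]
  rfl

lemma patternEquiv_cellsOf_comp {τ : Perm (Fin n)} (hτ : τ ∈ rowGroup T) (g : Fin k → Fin n) :
    PatternEquiv (cellsOf T (⇑τ ∘ g)) (cellsOf T g) :=
  (patternEquiv_cellsOf_iff T).mpr ⟨fun p => hτ (g p), fun _ _ => τ.injective.eq_iff⟩

lemma exists_mem_rowGroup_comp_eq {g g' : Fin k → Fin n}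
    (H : PatternEquiv (cellsOf T g) (cellsOf T g')) : ∃ τ ∈ rowGroup T, ⇑τ ∘ g = g' :=
  exists_mem_fiberGroup_comp_eq ((patternEquiv_cellsOf_iff T).mp H).1
    ((patternEquiv_cellsOf_iff T).mp H).2

lemma card_rowGroup_fiber_eq {g : Fin k → Fin n} {τ₀ : Perm (Fin n)} (hτ₀ : τ₀ ∈ rowGroup T) :
    #{τ : Perm (Fin n) | τ ∈ rowGroup T ∧ ⇑τ ∘ g = ⇑τ₀ ∘ g} =
      #{τ : Perm (Fin n) | τ ∈ rowGroup T ∧ ⇑τ ∘ g = g} := by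
  refine card_nbij' (τ₀⁻¹ * ·) (τ₀ * ·) ?_ ?_ (fun τ _ => by simp) (fun τ _ => by simp)
  · intro τ hτ
    simp only [coe_filter, mem_univ, true_and, Set.mem_ofPred_eq] at hτ ⊢
    refine ⟨mul_mem (inv_mem hτ₀) hτ.1, ?_⟩
    rw [Perm.coe_mul, Function.comp_assoc, hτ.2, ← Function.comp_assoc, ← Perm.coe_mul,
      inv_mul_cancel, Perm.coe_one, Function.id_comp]
  · intro τ hτ
    simp only [coe_filter, mem_univ, true_and, Set.mem_ofPred_eq] at hτ ⊢
    exact ⟨mul_mem hτ₀ hτ.1, by rw [Perm.coe_mul, Function.comp_assoc, hτ.2]⟩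

noncomputable def patternSum (h : Fin k → ℕ × ℕ) : (Fin k → Fin n) →₀ ℂ :=
  ∑ g ∈ {g | PatternEquiv (cellsOf T g) h}, Finsupp.single g 1

lemma patternSum_apply (h : Fin k → ℕ × ℕ) (g : Fin k → Fin n) :
    patternSum T h g = if PatternEquiv (cellsOf T g) h then 1 else 0 := by
  simp [patternSum, Finsupp.finsetSum_apply, Finsupp.single_apply]

lemma patternSum_congr {h h' : Fin k → ℕ × ℕ} (H : PatternEquiv h h') :
    patternSum T h = patternSum T h' := by
  ext g
  simp only [patternSum_apply]
  congr 1
  exact propext ⟨(·.trans H), (·.trans H.symm)⟩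

lemma patternSum_eq_zero {h : Fin k → ℕ × ℕ} (H : ∀ g, ¬ PatternEquiv (cellsOf T g) h) :
    patternSum T h = 0 := by
  ext g
  simp [patternSum_apply, H]

lemma asAlgebraHom_rowGroupSum_single (g : Fin k → Fin n) :
    (tensorPermRep n k).asAlgebraHom (rowGroupSum T) (Finsupp.single g 1) =
      (#{τ : Perm (Fin n) | τ ∈ rowGroup T ∧ ⇑τ ∘ g = g} : ℂ) • patternSum T (cellsOf T g) := by
  have horbit : ({τ | τ ∈ rowGroup T} : Finset _).image (fun τ : Perm (Fin n) => ⇑τ ∘ g) =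
      ({g' | PatternEquiv (cellsOf T g') (cellsOf T g)} : Finset _) := by
    ext g'
    simp only [mem_image, mem_filter, mem_univ, true_and]
    constructor
    · rintro ⟨τ, hτ, rfl⟩
      exact patternEquiv_cellsOf_comp T hτ g
    · intro H
      exact exists_mem_rowGroup_comp_eq T H.symm
  simp only [asAlgebraHom_rowGroupSum, tensorPermRep_single]
  rw [Finset.sum_comp (fun g' => Finsupp.single g' (1 : ℂ)), horbit, patternSum, smul_sum]
  simp only [filter_filter]
  refine sum_congr rfl fun g' hg' => ?_
  obtain ⟨τ₀, hτ₀, rfl⟩ := exists_mem_rowGroup_comp_eq T (mem_filter.mp hg').2.symm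
  rw [card_rowGroup_fiber_eq T hτ₀, Nat.cast_smul_eq_nsmul]

noncomputable def patternVec (h : Fin k → ℕ × ℕ) : (Fin k → Fin n) →₀ ℂ :=
  (tensorPermRep n k).asAlgebraHom (colGroupSum T) (patternSum T h)

lemma range_youngSymmetrizer :
    LinearMap.range ((tensorPermRep n k).asAlgebraHom (youngSymmetrizer T)) =
      Submodule.span ℂ (Set.range fun g => patternVec T (cellsOf T g)) := by
  have hsingle (g : Fin k → Fin n) :
      (tensorPermRep n k).asAlgebraHom (youngSymmetrizer T) (Finsupp.single g 1) =
        (#{τ : Perm (Fin n) | τ ∈ rowGroup T ∧ ⇑τ ∘ g = g} : ℂ) • patternVec T (cellsOf T g) := by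
    rw [youngSymmetrizer, map_mul, Module.End.mul_apply, asAlgebraHom_rowGroupSum_single,
      map_smul, patternVec]
  have hcard (g : Fin k → Fin n) : (#{τ : Perm (Fin n) | τ ∈ rowGroup T ∧ ⇑τ ∘ g = g} : ℂ) ≠ 0 :=
    Nat.cast_ne_zero.mpr (card_ne_zero.mpr ⟨1, by simp [one_mem]⟩)
  rw [LinearMap.range_eq_map, ← Finsupp.basisSingleOne.span_eq, Submodule.map_span,
    ← Set.range_comp, Submodule.span_range_eq_iSup, Submodule.span_range_eq_iSup]
  congr! 1
  ext1 g
  rw [Function.comp_apply, Finsupp.coe_basisSingleOne, hsingle,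
    Submodule.span_singleton_smul_eq (hcard g).isUnit]

variable {m : ℕ} {Λ' : YoungDiagram} (T' : Fin m ≃ Λ'.cells)

noncomputable def patternMass (x : (Fin k → Fin m) →₀ ℂ) (h : Fin k → ℕ × ℕ) : ℂ :=
  ∑ f ∈ {f | PatternEquiv (cellsOf T' f) h}, x f

noncomputable def patternMap : ((Fin k → Fin m) →₀ ℂ) →ₗ[ℂ] (Fin k → Fin n) →₀ ℂ :=
  Finsupp.linearCombination ℂ fun f => patternVec T (cellsOf T' f)

lemma patternMap_apply (x : (Fin k → Fin m) →₀ ℂ) (g : Fin k → Fin n) :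
    patternMap T T' x g = ∑ σ ∈ {σ | σ ∈ colGroup T},
      ((sign σ : ℤ) : ℂ) * patternMass T' x (cellsOf T (⇑σ ∘ g)) := by
  have hsum (g' : Fin k → Fin n) : Finsupp.linearCombination ℂ
      (fun f => patternSum T (cellsOf T' f)) x g' = patternMass T' x (cellsOf T g') := by
    rw [Finsupp.linearCombination_apply, Finsupp.sum_fintype _ _ (by simp),
      Finsupp.finsetSum_apply, patternMass, sum_filter]
    refine sum_congr rfl fun f _ => ?_
    rw [Finsupp.smul_apply, patternSum_apply, smul_eq_mul, mul_ite, mul_one, mul_zero]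
    exact if_congr ⟨PatternEquiv.symm, PatternEquiv.symm⟩ rfl rfl
  simp only [patternMap, patternVec]
  rw [← Function.comp_def ((tensorPermRep n k).asAlgebraHom (colGroupSum T)),
    ← Finsupp.apply_linearCombination, asAlgebraHom_colGroupSum_apply]
  simp only [hsum]

lemma patternMass_congr (x : (Fin k → Fin m) →₀ ℂ) {h h' : Fin k → ℕ × ℕ}
    (H : PatternEquiv h h') : patternMass T' x h = patternMass T' x h' := by
  simp only [patternMass]
  congr 1
  exact filter_congr fun f _ => ⟨(·.trans H), (·.trans H.symm)⟩

lemma patternMap_apply_eq_zero (x : (Fin k → Fin m) →₀ ℂ) {f : Fin k → Fin n} {a b : Fin n}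
    (hab : a ≠ b) (hcol : colOf T a = colOf T b) (ha : a ∉ Set.range f) (hb : b ∉ Set.range f) :
    patternMap T T' x f = 0 := by
  have ht : swap a b ∈ colGroup T := swap_mem_fiberGroup hcol
  have hfix : ⇑(swap a b) ∘ f = f := funext fun p =>
    swap_apply_of_ne_of_ne (fun h => ha ⟨p, h⟩) (fun h => hb ⟨p, h⟩)
  rw [patternMap_apply]
  refine sum_involution (fun σ _ => σ * swap a b) (fun σ _ => ?_) (fun σ _ _ h => ?_)
    (fun σ hσ => by simpa using mul_mem (by simpa using hσ) ht) (fun σ _ => by simp)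
  · rw [Perm.coe_mul, Function.comp_assoc, hfix, Perm.sign_mul, sign_swap hab]
    push_cast
    ring
  · exact hab (by simpa using h)

lemma patternMap_apply_swap_comp (x : (Fin k → Fin m) →₀ ℂ) (f : Fin k → Fin n) {u v : Fin n}
    (hfix : ∀ σ ∈ colGroup T, σ u = u ∧ σ v = v) (hrow : rowOf T u = rowOf T v) :
    patternMap T T' x (⇑(swap u v) ∘ f) = patternMap T T' x f := by
  rw [patternMap_apply, patternMap_apply]
  refine sum_congr rfl fun σ hσ => ?_
  obtain ⟨hu, hv⟩ := hfix σ (by simpa using hσ)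
  have hcomm : σ * swap u v = swap u v * σ := by rw [mul_swap_eq_swap_mul, hu, hv]
  rw [← Function.comp_assoc, ← Perm.coe_mul, hcomm, Perm.coe_mul, Function.comp_assoc,
    patternMass_congr T' x (patternEquiv_cellsOf_comp T (swap_mem_fiberGroup hrow) _)]

section Embedding

noncomputable def cellEmbedding (hsub : Λ.cells ⊆ Λ'.cells) : Fin n ↪ Fin m :=
  ⟨fun a => T'.symm ⟨T a, hsub (T a).2⟩, fun a b hab => by simpa using hab⟩

variable (hsub : Λ.cells ⊆ Λ'.cells)

lemma coe_apply_cellEmbedding (a : Fin n) : (T' (cellEmbedding T T' hsub a) : ℕ × ℕ) = T a := by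
  show (T' (T'.symm ⟨T a, _⟩) : ℕ × ℕ) = T a
  rw [apply_symm_apply]

lemma cellsOf_cellEmbedding_comp (g : Fin k → Fin n) :
    cellsOf T' (cellEmbedding T T' hsub ∘ g) = cellsOf T g :=
  funext fun p => coe_apply_cellEmbedding T T' hsub (g p)

lemma mem_range_cellEmbedding {b : Fin m} :
    b ∈ Set.range (cellEmbedding T T' hsub) ↔ (T' b : ℕ × ℕ) ∈ Λ.cells := by
  constructor
  · rintro ⟨a, rfl⟩
    simp [coe_apply_cellEmbedding]
  · intro hb
    exact ⟨T.symm ⟨T' b, hb⟩, T'.injective (Subtype.ext (by simp [coe_apply_cellEmbedding]))⟩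

lemma colOf_cellEmbedding (a : Fin n) : colOf T' (cellEmbedding T T' hsub a) = colOf T a := by
  simp [colOf, coe_apply_cellEmbedding]

lemma viaFintypeEmbedding_mem_colGroup_iff {σ : Perm (Fin n)} :
    σ.viaFintypeEmbedding (cellEmbedding T T' hsub) ∈ colGroup T' ↔ σ ∈ colGroup T := by
  have hcol := colOf_cellEmbedding T T' hsub
  constructor
  · intro h a
    simpa [hcol] using h (cellEmbedding T T' hsub a)
  · intro h b
    by_cases hb : b ∈ Set.range (cellEmbedding T T' hsub)
    · obtain ⟨a, rfl⟩ := hb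
      simpa [hcol] using h a
    · rw [Perm.viaFintypeEmbedding_apply_notMem_range _ _ hb]

/-- `hfix` makes extension by the identity a bijection from the column group of `T` onto that
of `T'`. -/
lemma patternMap_apply_eq_cellEmbedding_comp
    (hfix : ∀ σ ∈ colGroup T', ∀ b ∉ Set.range (cellEmbedding T T' hsub), σ b = b)
    {l : ℕ} {Λ'' : YoungDiagram} (S : Fin l ≃ Λ''.cells) (x : (Fin k → Fin l) →₀ ℂ)
    (g : Fin k → Fin n) :
    patternMap T S x g = patternMap T' S x (cellEmbedding T T' hsub ∘ g) := by
  rw [patternMap_apply, patternMap_apply]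
  refine sum_bij (fun σ _ => σ.viaFintypeEmbedding (cellEmbedding T T' hsub)) ?_ ?_ ?_ ?_
  · intro σ hσ
    simpa [viaFintypeEmbedding_mem_colGroup_iff] using hσ
  · intro σ₁ _ σ₂ _ h
    refine Equiv.ext fun a => ?_
    simpa using DFunLike.congr_fun h (cellEmbedding T T' hsub a)
  · intro σ' hσ'
    obtain ⟨σ, rfl⟩ := exists_viaFintypeEmbedding_eq _ (hfix σ' (by simpa using hσ'))
    exact ⟨σ, by simpa [viaFintypeEmbedding_mem_colGroup_iff] using hσ', rfl⟩
  · intro σ _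
    have hcomp : ⇑(σ.viaFintypeEmbedding (cellEmbedding T T' hsub)) ∘
        (cellEmbedding T T' hsub ∘ g) = cellEmbedding T T' hsub ∘ (⇑σ ∘ g) := by
      ext1 p
      simp
    rw [Perm.viaFintypeEmbedding_sign, hcomp, cellsOf_cellEmbedding_comp]

end Embedding

lemma range_patternMap (hsub : Λ.cells ⊆ Λ'.cells) :
    LinearMap.range (patternMap (k := k) T T') =
      LinearMap.range ((tensorPermRep n k).asAlgebraHom (youngSymmetrizer T)) := by
  rw [range_youngSymmetrizer, patternMap, Finsupp.range_linearCombination]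
  apply le_antisymm <;> rw [Submodule.span_le] <;> rintro _ ⟨g, rfl⟩ <;> dsimp only
  · by_cases hreal : ∃ g', PatternEquiv (cellsOf T g') (cellsOf T' g)
    · obtain ⟨g', hg'⟩ := hreal
      rw [patternVec, ← patternSum_congr T hg']
      exact Submodule.subset_span ⟨g', rfl⟩
    · rw [patternVec, patternSum_eq_zero T (not_exists.mp hreal), map_zero]
      exact zero_mem _
  · exact Submodule.subset_span
      ⟨_, congrArg (patternVec T) (cellsOf_cellEmbedding_comp T T' hsub g)⟩

lemma card_filter_cells (P : ℕ × ℕ → Prop) [DecidablePred P] :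
    #{i | P (T i)} = #{c ∈ Λ.cells | P c} := by
  refine card_bij (fun i _ => (T i : ℕ × ℕ)) (fun i hi => ?_) (fun i _ j _ h => ?_) (fun c hc => ?_)
  · simpa using hi
  · exact T.injective (Subtype.ext h)
  · obtain ⟨hc, hP⟩ := mem_filter.mp hc
    exact ⟨T.symm ⟨c, hc⟩, by simpa using hP, by simp⟩

end Tableau

lemma snd_lt_card_of_mem_cells {lam : YoungDiagram} {d : ℕ × ℕ} (hd : d ∈ lam.cells) :
    d.2 < lam.card := by
  have h1 : d.2 < lam.rowLen d.1 := YoungDiagram.mem_iff_lt_rowLen.mp (by simpa using hd)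
  have h2 : lam.rowLen d.1 ≤ lam.rowLen 0 := lam.rowLen_anti 0 d.1 (Nat.zero_le _)
  have h3 : lam.rowLen 0 ≤ lam.card := by
    rw [YoungDiagram.rowLen_eq_card]
    exact card_le_card (filter_subset _ _)
  omega

/-- The cells of `λ̄ = (n - |λ|, λ₁, λ₂, …)`. -/
def paddedCells (lam : YoungDiagram) (n : ℕ) : Finset (ℕ × ℕ) :=
  ((range (n - lam.card)).image fun j => (0, j)) ∪ lam.cells.image fun c => (c.1 + 1, c.2)

section Padded

variable {lam : YoungDiagram} {k n m : ℕ}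

lemma mem_paddedCells {c : ℕ × ℕ} :
    c ∈ paddedCells lam n ↔
      (c.1 = 0 ∧ c.2 < n - lam.card) ∨ ∃ d ∈ lam.cells, (d.1 + 1, d.2) = c := by
  simp only [paddedCells, mem_union, mem_image, mem_range]
  refine or_congr ⟨?_, ?_⟩ Iff.rfl
  · rintro ⟨j, hj, rfl⟩
    exact ⟨rfl, hj⟩
  · rintro ⟨h1, h2⟩
    exact ⟨c.2, h2, by rw [← h1]⟩

lemma paddedCells_mono (h : n ≤ m) : paddedCells lam n ⊆ paddedCells lam m :=
  union_subset_union (image_subset_image (range_subset_range.mpr (by omega))) subset_rfl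

lemma mem_paddedCells_of_snd_lt {c : ℕ × ℕ} (hc : c ∈ paddedCells lam m)
    (h : c.2 < n - lam.card) : c ∈ paddedCells lam n := by
  rw [mem_paddedCells] at hc ⊢
  exact hc.imp_left fun hc => ⟨hc.1, h⟩

lemma fst_eq_zero_of_mem_paddedCells {c : ℕ × ℕ} (hc : c ∈ paddedCells lam n)
    (h : lam.card ≤ c.2) : c.1 = 0 := by
  rcases mem_paddedCells.mp hc with hc | ⟨d, hd, rfl⟩
  · exact hc.1
  · exact absurd h (snd_lt_card_of_mem_cells hd).not_ge

lemma card_paddedCells (h : lam.card ≤ n) : #(paddedCells lam n) = n := by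
  rw [paddedCells, card_union_of_disjoint,
    card_image_of_injective _ (fun a b hab => by simpa using hab),
    card_image_of_injective _ (fun a b hab => by simpa [Prod.ext_iff] using hab), card_range]
  · have : lam.card = #lam.cells := rfl
    omega
  · simp [disjoint_left]

lemma filter_snd_lt_paddedCells (hlam : lam.card ≤ k) (hkn : k + lam.card ≤ n) :
    {c ∈ paddedCells lam n | c.2 < k} = paddedCells lam (k + lam.card) := by
  ext c
  rw [mem_filter, mem_paddedCells, mem_paddedCells, Nat.add_sub_cancel]
  constructor
  · rintro ⟨hc | hc, hck⟩
    · exact Or.inl ⟨hc.1, hck⟩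
    · exact Or.inr hc
  · rintro (hc | ⟨d, hd, rfl⟩)
    · exact ⟨Or.inl ⟨hc.1, by omega⟩, hc.2⟩
    · exact ⟨Or.inr ⟨d, hd, rfl⟩, (snd_lt_card_of_mem_cells hd).trans_le hlam⟩

variable {Λ : YoungDiagram} (T : Fin n ≃ Λ.cells) (hΛ : Λ.cells = paddedCells lam n)
include hΛ

lemma rowOf_eq_zero {a : Fin n} (h : lam.card ≤ colOf T a) : rowOf T a = 0 :=
  fst_eq_zero_of_mem_paddedCells (by rw [← hΛ]; exact (T a).2) h

lemma colGroup_apply_eq_self {σ : Perm (Fin n)} (hσ : σ ∈ colGroup T) {a : Fin n}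
    (h : lam.card ≤ colOf T a) : σ a = a := by
  have hcol : colOf T (σ a) = colOf T a := hσ a
  have hrow : rowOf T (σ a) = rowOf T a := by
    rw [rowOf_eq_zero T hΛ h, rowOf_eq_zero T hΛ (hcol ▸ h)]
  exact T.injective (Subtype.ext (Prod.ext hrow hcol))

lemma card_colOf_lt (hlam : lam.card ≤ k) (hkn : k + lam.card ≤ n) :
    #{i | colOf T i < k} = k + lam.card := by
  rw [← card_paddedCells (lam := lam) (by omega : lam.card ≤ k + lam.card),
    ← filter_snd_lt_paddedCells hlam hkn, ← hΛ, ← card_filter_cells T (·.2 < k)]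
  rfl

/-- `f` meets fewer than `|λ|` of the `k + |λ|` cells in the first `k` columns, so two of the
others share a column. -/
lemma exists_ne_colOf_eq_notMem_range (hlam : lam.card ≤ k) (hkn : k + lam.card ≤ n)
    (f : Fin k → Fin n) (hfree : k < #{v ∈ univ.image f | k ≤ colOf T v} + lam.card) :
    ∃ a b, a ≠ b ∧ colOf T a = colOf T b ∧ a ∉ Set.range f ∧ b ∉ Set.range f := by
  have hsplit := card_filter_add_card_filter_not (s := univ.image f) (fun v => colOf T v < k)
  simp only [not_lt] at hsplit
  set usedCore := {v ∈ univ.image f | colOf T v < k}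
  have himage : #(univ.image f) ≤ k := card_image_le.trans (by simp)
  have hunused : #(range k) < #(({i | colOf T i < k} : Finset (Fin n)) \ usedCore) := by
    have := le_card_sdiff usedCore ({i | colOf T i < k} : Finset (Fin n))
    rw [card_colOf_lt T hΛ hlam hkn] at this
    rw [card_range]
    omega
  have hmem {a : Fin n} (ha : a ∈ ({i | colOf T i < k} : Finset (Fin n)) \ usedCore) :
      colOf T a < k ∧ a ∉ Set.range f := by
    simp only [usedCore, mem_sdiff, mem_filter, mem_univ, true_and, mem_image] at ha
    exact ⟨ha.1, fun ⟨p, hp⟩ => ha.2 ⟨⟨p, hp⟩, ha.1⟩⟩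
  obtain ⟨a, ha, b, hb, hab, hcol⟩ := exists_ne_map_eq_of_card_lt_of_maps_to hunused
    (f := colOf T) fun a ha => mem_coe.mpr (mem_range.mpr (hmem ha).1)
  exact ⟨a, b, hab, hcol, (hmem ha).2, (hmem hb).2⟩

end Padded

lemma card_image_swap_comp_sdiff_lt {κ β : Type*} [Fintype κ] [DecidableEq β] (f : κ → β)
    (s : Finset β) {v w : β} (hv : v ∈ univ.image f) (hvs : v ∉ s) (hw : w ∉ univ.image f)
    (hws : w ∈ s) : #(univ.image (⇑(swap v w) ∘ f) \ s) < #(univ.image f \ s) := by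
  have hsub : univ.image (⇑(swap v w) ∘ f) \ s ⊆ (univ.image f \ s).erase v := by
    intro u hu
    simp only [mem_sdiff, mem_image, mem_univ, true_and, Function.comp_apply, mem_erase] at hu ⊢
    obtain ⟨⟨p, rfl⟩, hus⟩ := hu
    have hpw : f p ≠ w := fun h => hw (mem_image.mpr ⟨p, mem_univ _, h⟩)
    by_cases hpv : f p = v
    · exact absurd (by rw [hpv, swap_apply_left]; exact hws) hus
    · rw [swap_apply_of_ne_of_ne hpv hpw] at hus ⊢
      exact ⟨hpv, ⟨p, rfl⟩, hus⟩
  calc _ ≤ #((univ.image f \ s).erase v) := card_le_card hsub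
    _ < _ := card_erase_lt_of_mem (mem_sdiff.mpr ⟨hv, hvs⟩)

section Compare

variable {lam : YoungDiagram} {k n m : ℕ} {Λn Λm : YoungDiagram}
  (hΛn : Λn.cells = paddedCells lam n) (hΛm : Λm.cells = paddedCells lam m)
  (Tn : Fin n ≃ Λn.cells) (Tm : Fin m ≃ Λm.cells) (hsub : Λn.cells ⊆ Λm.cells)
include hΛn hΛm

lemma sub_card_le_colOf_of_notMem_range {b : Fin m}
    (hb : b ∉ Set.range (cellEmbedding Tn Tm hsub)) : n - lam.card ≤ colOf Tm b := by
  by_contra! h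
  refine hb ((mem_range_cellEmbedding Tn Tm hsub).mpr ?_)
  rw [hΛn]
  exact mem_paddedCells_of_snd_lt (by rw [← hΛm]; exact (Tm b).2) h

lemma colGroup_apply_eq_self_of_notMem_range (hlam : lam.card ≤ k) (hn : 2 * k ≤ n)
    {σ : Perm (Fin m)} (hσ : σ ∈ colGroup Tm) {b : Fin m}
    (hb : b ∉ Set.range (cellEmbedding Tn Tm hsub)) : σ b = b :=
  colGroup_apply_eq_self Tm hΛm hσ
    (by have := sub_card_le_colOf_of_notMem_range hΛn hΛm Tn Tm hsub hb; omega)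

lemma exists_colOf_le_notMem_image (hlam : lam.card ≤ k) (hn : 2 * k ≤ n) {f : Fin k → Fin m}
    (hfew : #{v ∈ univ.image f | k ≤ colOf Tm v} + lam.card ≤ k) {v₀ : Fin m}
    (hv₀ : v₀ ∈ univ.image f) (hv₀' : v₀ ∉ Set.range (cellEmbedding Tn Tm hsub)) :
    ∃ a, k ≤ colOf Tn a ∧ cellEmbedding Tn Tm hsub a ∉ univ.image f := by
  set ι := cellEmbedding Tn Tm hsub
  set F := {v ∈ univ.image f | k ≤ colOf Tm v}
  have hsplit := card_filter_add_card_filter_not (s := univ) (fun a => colOf Tn a < k)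
  simp only [not_lt, card_univ, Fintype.card_fin] at hsplit
  rw [card_colOf_lt Tn hΛn hlam (by omega)] at hsplit
  have hv₀F : v₀ ∈ F := mem_filter.mpr
    ⟨hv₀, by have := sub_card_le_colOf_of_notMem_range hΛn hΛm Tn Tm hsub hv₀'; omega⟩
  have hlt : #(F.erase v₀) < #(({a | k ≤ colOf Tn a} : Finset (Fin n)).map ι) := by
    have := card_pos.mpr ⟨v₀, hv₀F⟩
    rw [card_map, card_erase_of_mem hv₀F]
    omega
  obtain ⟨_, hmem, hnot⟩ := exists_mem_notMem_of_card_lt_card hlt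
  obtain ⟨a, ha, rfl⟩ := mem_map.mp hmem
  refine ⟨a, (mem_filter.mp ha).2, fun himg => hnot (mem_erase.mpr ⟨?_, ?_⟩)⟩
  · exact fun h => hv₀' ⟨a, h⟩
  · exact mem_filter.mpr ⟨himg, (colOf_cellEmbedding Tn Tm hsub a).symm ▸ (mem_filter.mp ha).2⟩

lemma patternMap_eq_zero_of_forall_cellEmbedding_comp (hlam : lam.card ≤ k) (hn : 2 * k ≤ n)
    (hm : 2 * k ≤ m) (x : (Fin k → Fin m) →₀ ℂ)
    (hx : ∀ g, patternMap Tm Tm x (cellEmbedding Tn Tm hsub ∘ g) = 0) (f : Fin k → Fin m) :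
    patternMap Tm Tm x f = 0 := by
  set ι := cellEmbedding Tn Tm hsub
  induction hN : #(univ.image f \ univ.map ι) using Nat.strong_induction_on generalizing f with
  | _ N ih =>
  by_cases hmany : k < #{v ∈ univ.image f | k ≤ colOf Tm v} + lam.card
  · obtain ⟨a, b, hab, hcol, ha, hb⟩ :=
      exists_ne_colOf_eq_notMem_range Tm hΛm hlam (by omega) f hmany
    exact patternMap_apply_eq_zero Tm Tm x hab hcol ha hb
  by_cases hout : ∃ v₀ ∈ univ.image f, v₀ ∉ Set.range ι
  · obtain ⟨v₀, hv₀, hv₀'⟩ := hout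
    obtain ⟨a, ha, haf⟩ :=
      exists_colOf_le_notMem_image hΛn hΛm Tn Tm hsub hlam hn (not_lt.mp hmany) hv₀ hv₀'
    have hv₀col := sub_card_le_colOf_of_notMem_range hΛn hΛm Tn Tm hsub hv₀'
    have hacol : colOf Tm (ι a) = colOf Tn a := colOf_cellEmbedding Tn Tm hsub a
    have hfix : ∀ σ ∈ colGroup Tm, σ v₀ = v₀ ∧ σ (ι a) = ι a := fun σ hσ =>
      ⟨colGroup_apply_eq_self Tm hΛm hσ (by omega), colGroup_apply_eq_self Tm hΛm hσ (by omega)⟩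
    have hrow : rowOf Tm v₀ = rowOf Tm (ι a) := by
      rw [rowOf_eq_zero Tm hΛm (by omega), rowOf_eq_zero Tm hΛm (by omega)]
    rw [← patternMap_apply_swap_comp Tm Tm x f hfix hrow]
    exact ih _ (hN ▸ card_image_swap_comp_sdiff_lt f _ hv₀ (by simpa using hv₀') haf (by simp)) _
      rfl
  · push Not at hout
    choose g hg using fun p => hout (f p) (mem_image_of_mem f (mem_univ p))
    rw [show f = ι ∘ g from funext fun p => (hg p).symm]
    exact hx g

end Compare

lemma ker_patternMap_eq {lam : YoungDiagram} {k n m : ℕ} {Λn Λm : YoungDiagram}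
    (hΛn : Λn.cells = paddedCells lam n) (hΛm : Λm.cells = paddedCells lam m)
    (Tn : Fin n ≃ Λn.cells) (Tm : Fin m ≃ Λm.cells) (hsub : Λn.cells ⊆ Λm.cells)
    (hlam : lam.card ≤ k) (hn : 2 * k ≤ n) (hm : 2 * k ≤ m) :
    LinearMap.ker (patternMap (k := k) Tn Tm) = LinearMap.ker (patternMap Tm Tm) := by
  have htransport := patternMap_apply_eq_cellEmbedding_comp (k := k) Tn Tm hsub
    (fun σ hσ b hb => colGroup_apply_eq_self_of_notMem_range hΛn hΛm Tn Tm hsub hlam hn hσ hb) Tm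
  ext x
  simp only [LinearMap.mem_ker, Finsupp.ext_iff, Finsupp.coe_zero, Pi.zero_apply]
  constructor
  · exact fun h => patternMap_eq_zero_of_forall_cellEmbedding_comp hΛn hΛm Tn Tm hsub hlam hn hm x
      fun g => (htransport x g).symm.trans (h g)
  · exact fun h g => (htransport x g).trans (h _)

lemma finrank_range_eq_of_ker_eq {R V W W' : Type*} [Ring R] [AddCommGroup V] [Module R V]
    [AddCommGroup W] [Module R W] [AddCommGroup W'] [Module R W'] (f : V →ₗ[R] W)
    (g : V →ₗ[R] W') (h : LinearMap.ker f = LinearMap.ker g) :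
    Module.finrank R (LinearMap.range f) = Module.finrank R (LinearMap.range g) :=
  ((f.quotKerEquivRange.symm.trans (Submodule.quotEquivOfEq _ _ h)).trans
    g.quotKerEquivRange).finrank_eq

end TensorStability

/-- Stability of multiplicities: for `n ≥ 2k`, the multiplicity of the irreducible
`S_n`-module `S^{λ̄}` in `(ℂ^n)^{⊗k}` (where `λ̄ = (n − |λ|, λ₁, λ₂, …)`) depends only on
`λ` and `k`, not on `n`.  Here `Λn`, `Λm` are the Young diagrams of `λ̄` for the two
values `n`, `m` of the parameter, and `Tn`, `Tm` are tableaux of these shapes. -/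
theorem tensor_multiplicity_stable (k : ℕ) (lam : YoungDiagram) (hlam : lam.card ≤ k)
    (n m : ℕ) (hn : 2 * k ≤ n) (hm : 2 * k ≤ m)
    (Λn Λm : YoungDiagram)
    (hΛn : Λn.cells = ((Finset.range (n - lam.card)).image fun j => (0, j)) ∪
      lam.cells.image (fun c => (c.1 + 1, c.2)))
    (hΛm : Λm.cells = ((Finset.range (m - lam.card)).image fun j => (0, j)) ∪
      lam.cells.image (fun c => (c.1 + 1, c.2)))
    (Tn : Fin n ≃ Λn.cells) (Tm : Fin m ≃ Λm.cells) :
    tensorMultiplicity n k Tn = tensorMultiplicity m k Tm := by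
  wlog hnm : n ≤ m generalizing n m Λn Λm
  · exact (this m n hm hn Λm Λn hΛm hΛn Tm Tn (le_of_not_ge hnm)).symm
  have hsub : Λn.cells ⊆ Λm.cells := by
    rw [hΛn, hΛm]
    exact TensorStability.paddedCells_mono hnm
  rw [tensorMultiplicity, tensorMultiplicity, ← TensorStability.range_patternMap Tn Tm hsub,
    ← TensorStability.range_patternMap Tm Tm subset_rfl]
  exact TensorStability.finrank_range_eq_of_ker_eq _ _
    (TensorStability.ker_patternMap_eq hΛn hΛm Tn Tm hsub hlam hn hm)
end
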